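/- arXiv:2112.11337 — 3 statements merged into one kernel-verified Lean document; each statement's English description precedes it below -/
import Mathlib

section
/- The chain of control messages blocking a queued message in the Channel Sync algorithm is finite: if all control messages existing in the queues at or after reference time 0 were added to the queues no earlier than time −max(δ_r, δ_s), and the corresponding application messages were sent after time −δ − max(δ_r, δ_s), and only finitely many messages are sent in any bounded time interval, then the 'waits-for' chain of control messages has bounded length. -/
/-- Finiteness of the waits-for chain in Channel Sync. The
application messages corresponding to the blocking control-message chain were
all sent in the bounded interval (−δ − max(δ_r, δ_s), 0) with strictly
decreasing send times along the chain. If only finitely many messages have send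
time in that interval, the chain length is bounded (by the number of such
messages). -/
theorem waits_for_chain_is_finite
    {M : Type*} (δ δr δs : ℝ) (sendTime : M → ℝ)
    (hfin : {m : M | -δ - max δr δs < sendTime m ∧ sendTime m < 0}.Finite)
    (k : ℕ) (chain : Fin k → M)
    (hmem : ∀ a : Fin k, -δ - max δr δs < sendTime (chain a) ∧ sendTime (chain a) < 0)
    (hdec : ∀ a b : Fin k, a < b → sendTime (chain b) < sendTime (chain a)) :
    k ≤ hfin.toFinset.card := by
  have hinj : Function.Injective chain := by
    intro a b hab
    by_contra hne
    rcases lt_or_gt_of_ne hne with h | h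
    · exact absurd (hdec a b h) (by rw [hab]; exact lt_irrefl _)
    · exact absurd (hdec b a h) (by rw [hab]; exact lt_irrefl _)
  calc k = Finset.univ.card (α := Fin k) := (Finset.card_fin k).symm
    _ ≤ hfin.toFinset.card := Finset.card_le_card_of_injOn chain
        (fun a _ => hfin.mem_toFinset.mpr (hmem a)) (hinj.injOn)
end

section
/- In a fault-free execution of the RST algorithm, the matrix clock invariant holds: at any point in the execution, for all processes p_i and all pairs (j,k), M_i[j,k] is at most the true number of messages sent by p_j to p_k so far, and M_i[i,k] equals exactly the number of messages p_i has sent to p_k. -/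
/-- RST matrix clock invariant in a fault-free execution. The
execution is a sequence of T steps; each step is either a send event (by some
p_i to some p_k: the true sent count for (i,k) and M_i[i,k] are incremented,
everything else unchanged) or a deliver event (at some p_i of a message sent at
an earlier step s by p_j to p_i, carrying timestamp equal to p_j's matrix at
time s; p_i merges the componentwise max, sent counts unchanged).  Then at all
times, for every process p_i and pair (j,k), M_i[j,k] is at most the true number
of messages sent by p_j to p_k so far, and M_i[i,k] equals exactly the number of
messages p_i has sent to p_k. -/
theorem rst_matrix_clock_invariant
    (n T : ℕ)
    (Mc : ℕ → Fin n → Fin n → Fin n → ℕ)   -- Mc t i j k : M_i[j,k] at time t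
    (sent : ℕ → Fin n → Fin n → ℕ)         -- sent t j k : true #messages from p_j to p_k by time t
    (hinitM : ∀ i j k, Mc 0 i j k = 0)
    (hinitS : ∀ j k, sent 0 j k = 0)
    (hstep : ∀ t, t < T →
      -- send event by i to k
      ((∃ i k : Fin n,
          (∀ j l, sent (t+1) j l = if j = i ∧ l = k then sent t j l + 1 else sent t j l) ∧
          (∀ j l, Mc (t+1) i j l = if j = i ∧ l = k then Mc t i j l + 1 else Mc t i j l) ∧
          (∀ i' : Fin n, i' ≠ i → ∀ j l, Mc (t+1) i' j l = Mc t i' j l))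
      ∨
      -- deliver event at i of a message sent at step s by j to i with timestamp Mc s j
      (∃ (i j : Fin n) (s : ℕ), s < t ∧
          sent (s+1) j i = sent s j i + 1 ∧   -- the message was really sent by j to i at step s
          (∀ j' l, sent (t+1) j' l = sent t j' l) ∧
          (∀ j' l, Mc (t+1) i j' l = max (Mc t i j' l) (Mc s j j' l)) ∧
          (∀ i' : Fin n, i' ≠ i → ∀ j' l, Mc (t+1) i' j' l = Mc t i' j' l)))) :
    ∀ t, t ≤ T → ∀ i j k : Fin n, Mc t i j k ≤ sent t j k ∧ Mc t i i k = sent t i k := by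
  have hmono : ∀ t, t < T → ∀ j k, sent t j k ≤ sent (t+1) j k := by
    intro t ht j k
    rcases hstep t ht with ⟨a, b, hs, _, _⟩ | ⟨a, b, s, _, _, hs, _, _⟩
    · rw [hs]; split <;> omega
    · rw [hs j k]
  have hmono' : ∀ s t, s ≤ t → t ≤ T → ∀ j k, sent s j k ≤ sent t j k := by
    intro s t hst htT j k
    induction t with
    | zero =>
      have h0 : s = 0 := Nat.le_zero.mp hst
      subst h0; rfl
    | succ t ih =>
      rcases Nat.lt_or_ge s (t+1) with h | h
      · exact le_trans (ih (by omega) (by omega)) (hmono t (by omega) j k)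
      · have : s = t+1 := by omega
        subst this; rfl
  intro t
  induction t using Nat.strong_induction_on with
  | _ t IH =>
    match t with
    | 0 => intro _ i j k; simp [hinitM, hinitS]
    | (t+1) =>
      intro htT i j k
      have ih' := IH t (by omega) (by omega)
      rcases hstep t (by omega) with ⟨a, b, hs, hM, hM'⟩ | ⟨a, b, s, hst, hsent, hS, hM, hM'⟩
      · by_cases hia : i = a
        · subst hia
          constructor
          · rw [hs, hM]
            split
            · exact Nat.succ_le_succ (ih' i j k).1
            · exact (ih' i j k).1
          · rw [hs, hM]
            by_cases hc : i = i ∧ k = b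
            · obtain ⟨-, hk⟩ := hc; subst hk
              simp [(ih' i i k).2]
            · simp [hc, (ih' i i k).2]
        · rw [hs, hs, hM' i hia, hM' i hia]
          have hne : ¬(i = a ∧ k = b) := fun h => hia h.1
          constructor
          · split
            · exact le_trans (ih' i j k).1 (Nat.le_succ _)
            · exact (ih' i j k).1
          · simp only [hne, if_false]
            exact (ih' i i k).2
      · have ihs := IH s (by omega) (by omega)
        have hsle : ∀ j' l, sent s j' l ≤ sent t j' l :=
          fun j' l => hmono' s t (by omega) (by omega) j' l
        rw [hS, hS]
        by_cases hia : i = a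
        · subst hia
          rw [hM, hM]
          constructor
          · exact max_le (ih' i j k).1 (le_trans (ihs b j k).1 (hsle j k))
          · have h1 : Mc s b i k ≤ sent t i k := le_trans (ihs b i k).1 (hsle i k)
            rw [(ih' i i k).2]
            omega
        · rw [hM' i hia, hM' i hia]
          exact ih' i j k
end

section
/- In a fault-free execution of the RST algorithm, the delivery condition is eventually satisfied for every received message: if message m sent by p_j to p_i carries timestamp M^m with M^m[k,i] ≤ (true number of messages sent by p_k to p_i before the send of m whose sends causally precede send(m)) for all k, and all those messages are eventually delivered at p_i, then eventually ∀k, M^m[k,i] ≤ Delivered_i[k], so m is eventually delivered (liveness in the fault-free case). -/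
/-- RST fault-free liveness. Message m sent by p_j to p_i carries
timestamp M^m with M^m[k,i] ≤ C k, where C k is the number of messages from p_k
to p_i sent in the causal past of send(m). Delivered_i[k] is nondecreasing in
time, and every message in the causal past of m is eventually delivered, so for
each k there is a time when Delivered_i[k] ≥ C k. Then eventually the delivery
condition ∀ k, M^m[k,i] ≤ Delivered_i[k] holds, so m is eventually delivered. -/
theorem rst_fault_free_liveness
    {n : ℕ} (i : Fin n)
    (Mm : Fin n → Fin n → ℕ) (C : Fin n → ℕ)
    (hts : ∀ k, Mm k i ≤ C k)
    (Delivered : ℕ → Fin n → ℕ)           -- Delivered_i[·] as a function of time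
    (hmono : ∀ t k, Delivered t k ≤ Delivered (t + 1) k)
    (heventual : ∀ k, ∃ t, C k ≤ Delivered t k)
    (deliverable : ℕ → Prop)
    (hdeliv : ∀ t, (∀ k, Mm k i ≤ Delivered t k) → deliverable t) :
    ∃ t, deliverable t := by
  have hmono' : ∀ k, Monotone (fun t => Delivered t k) := fun k =>
    monotone_nat_of_le_succ (fun t => hmono t k)
  choose f hf using heventual
  refine ⟨Finset.univ.sup f, hdeliv _ (fun k => ?_)⟩
  exact (hts k).trans ((hf k).trans (hmono' k (Finset.le_sup (Finset.mem_univ k))))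
end
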